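/- arXiv:2510.00420 — 6 statements merged into one kernel-verified Lean document; each statement's English description precedes it below -/
import Mathlib

section
/- Let m > 0 and 0 < β < m. Then there exists L₀ > 0 (depending only on β and m) such that for every L ≥ L₀, every μ ≥ m², all real numbers a⁺, a⁻, and all natural numbers t₁ < t₂ < t₃, the function f(r) = a⁺·exp(√μ·r) + a⁻·exp(−√μ·r) satisfies ∫_{t₂L}^{(t₂+1)L} f(r)² dr ≤ exp(−2βL)·( ∫_{t₁L}^{(t₁+1)L} f(r)² dr + ∫_{t₃L}^{(t₃+1)L} f(r)² dr ). -/
/-!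
Write `s = √μ`. Seen from the centre `c` of a tube of length `L`, the mode is `A e^{s(r-c)} + B e^{-s(r-c)}` with
`A = a⁺ e^{sc}`, `B = a⁻ e^{-sc}`, and its squared norm on the tube is
`(sinh (sL) / s) (A² + B²) + 2 a⁺ a⁻ L`. Moving the tube by `L` multiplies `A²` or `B²` by `e^{2sL}`
in the growing direction, so the diagonal part on the middle tube is `e^{-2sL}` times that on the
outer ones. The cross term does not depend on the tube, and since `AB = a⁺ a⁻`, AM-GM bounds it by
`sL / sinh (sL)` times the diagonal part, which is negligible once `L` is large.
-/

open Real

theorem integral_sq_exp_mode_centered (A B : ℝ) {s : ℝ} (hs : s ≠ 0) (h : ℝ) :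
    ∫ r in -h..h, (A * exp (s * r) + B * exp (-s * r)) ^ 2 =
      sinh (2 * s * h) / s * (A ^ 2 + B ^ 2) + 4 * A * B * h := by
  have hF : ∀ r, HasDerivAt
      (fun r => (A ^ 2 * exp (2 * s * r) - B ^ 2 * exp (-(2 * s * r))) / (2 * s) + 2 * A * B * r)
      ((A * exp (s * r) + B * exp (-s * r)) ^ 2) r := by
    intro r
    have hlin := (hasDerivAt_id r).const_mul (2 * s)
    refine ((((hlin.exp.const_mul (A ^ 2)).sub (hlin.neg.exp.const_mul (B ^ 2))).div_const
      (2 * s)).add ((hasDerivAt_id r).const_mul (2 * A * B))).congr_deriv ?_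
    have hexp : exp (s * r) * exp (-(s * r)) = 1 := by rw [← exp_add]; simp
    simp only [id, mul_one, Pi.neg_apply, neg_mul]
    rw [show 2 * s * r = s * r + s * r by ring, neg_add, exp_add, exp_add]
    field_simp
    linear_combination (-2 * A * B) * hexp
  rw [intervalIntegral.integral_eq_sub_of_hasDerivAt (fun r _ => hF r)
    (by apply Continuous.intervalIntegrable; fun_prop), sinh_eq]
  field_simp
  ring_nf

noncomputable def tubeEnergy (s A B L : ℝ) (t : ℕ) : ℝ :=
  ∫ r in (t * L)..((t + 1) * L), (A * exp (s * r) + B * exp (-s * r)) ^ 2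

theorem tubeEnergy_eq (A B L : ℝ) {s : ℝ} (hs : s ≠ 0) (t : ℕ) :
    tubeEnergy s A B L t =
      sinh (s * L) / s * (A * exp (s * ((t + 1 / 2) * L))) ^ 2
        + sinh (s * L) / s * (B * exp (-s * ((t + 1 / 2) * L))) ^ 2 + 2 * A * B * L := by
  set c : ℝ := (t + 1 / 2) * L
  have hshift : ∀ r, A * exp (s * (r + c)) + B * exp (-s * (r + c)) =
      A * exp (s * c) * exp (s * r) + B * exp (-s * c) * exp (-s * r) := by
    intro r
    rw [mul_add, mul_add, exp_add, exp_add]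
    ring
  have hcenter := intervalIntegral.integral_comp_add_right
    (fun r => (A * exp (s * r) + B * exp (-s * r)) ^ 2) c (a := -(L / 2)) (b := L / 2)
  simp only [hshift, integral_sq_exp_mode_centered _ _ hs] at hcenter
  have hexp : exp (s * c) * exp (-s * c) = 1 := by rw [← exp_add]; simp
  rw [tubeEnergy, show (t : ℝ) * L = -(L / 2) + c by ring, show ((t : ℝ) + 1) * L = L / 2 + c by ring,
    ← hcenter, show 2 * s * (L / 2) = s * L by ring]
  linear_combination (2 * A * B * L) * hexp

theorem three_mul_le_sinh {x : ℝ} (hx : 10 ≤ x) : 3 * x ≤ sinh x := by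
  have h₁ := quadratic_le_exp_of_nonneg (by linarith : 0 ≤ x)
  have h₂ : exp (-x) ≤ 1 := exp_le_one_iff.2 (by linarith)
  rw [sinh_eq]
  nlinarith

theorem two_mul_abs_mul_le_sq_add_sq (A B x : ℝ) :
    2 * |A * B| ≤ (A * exp x) ^ 2 + (B * exp (-x)) ^ 2 := by
  have hAB : |A * B| = |A * exp x| * |B * exp (-x)| := by
    rw [← abs_mul, mul_mul_mul_comm, ← exp_add, add_neg_cancel, exp_zero, mul_one]
  rw [hAB, ← mul_assoc]
  simpa only [sq_abs] using two_mul_le_add_sq |A * exp x| |B * exp (-x)|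

theorem exp_two_mul_mul_sq_le {d u v : ℝ} (A : ℝ) (h : d + u ≤ v) :
    exp (2 * d) * (A * exp u) ^ 2 ≤ (A * exp v) ^ 2 := by
  calc exp (2 * d) * (A * exp u) ^ 2 = A ^ 2 * exp (2 * (d + u)) := by
        rw [mul_pow, ← exp_nat_mul, mul_add, exp_add]; push_cast; ring
    _ ≤ A ^ 2 * exp (2 * v) := by gcongr
    _ = (A * exp v) ^ 2 := by rw [mul_pow, ← exp_nat_mul]; push_cast; ring

/-- `pᵢ` and `nᵢ` stand for the growing and decaying diagonal parts of the energy on three tubes,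
`c` for their common cross term. -/
theorem le_mul_add_of_outer_growth {p₁ p₂ p₃ n₁ n₂ n₃ c κ ε : ℝ} (hp₁ : 0 ≤ p₁) (hn₃ : 0 ≤ n₃)
    (hc₁ : 3 * |c| ≤ p₁ + n₁) (hc₂ : 3 * |c| ≤ p₂ + n₂) (hc₃ : 3 * |c| ≤ p₃ + n₃)
    (hp : κ * p₂ ≤ p₃) (hn : κ * n₂ ≤ n₁) (hε : 0 ≤ ε) (hκε : 2 ≤ κ * ε) :
    p₂ + n₂ + c ≤ ε * ((p₁ + n₁ + c) + (p₃ + n₃ + c)) := by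
  have hc := neg_abs_le c
  have hc' := le_abs_self c
  have hgrowth : 2 / 3 * (κ * (p₂ + n₂)) ≤ (p₁ + n₁ + c) + (p₃ + n₃ + c) := by linarith
  have hpn : 0 ≤ p₂ + n₂ := by linarith [abs_nonneg c]
  have h₁ := mul_le_mul_of_nonneg_left hgrowth hε
  have h₂ := mul_le_mul_of_nonneg_right hκε hpn
  linarith

theorem tubeEnergy_le_mul_add {s L ε : ℝ} (A B : ℝ) (hs : 0 < s) (hL : 0 ≤ L)
    (hsinh : 3 * (s * L) ≤ sinh (s * L)) (hε : 0 ≤ ε) (hκε : 2 ≤ exp (2 * (s * L)) * ε)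
    {t₁ t₂ t₃ : ℕ} (h₁₂ : t₁ < t₂) (h₂₃ : t₂ < t₃) :
    tubeEnergy s A B L t₂ ≤ ε * (tubeEnergy s A B L t₁ + tubeEnergy s A B L t₃) := by
  set q := sinh (s * L) / s
  have hq : 3 * L ≤ q := by rw [le_div_iff₀ hs]; linarith
  have hq0 : 0 ≤ q := by linarith
  have hcross (x : ℝ) :
      3 * |2 * A * B * L| ≤ q * (A * exp (s * x)) ^ 2 + q * (B * exp (-s * x)) ^ 2 := by
    rw [← mul_add, neg_mul]
    calc 3 * |2 * A * B * L| = 3 * L * (2 * |A * B|) := by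
          rw [mul_comm _ L, abs_mul, abs_of_nonneg hL, mul_assoc, abs_mul, abs_two]; ring
      _ ≤ q * (2 * |A * B|) := by gcongr
      _ ≤ q * ((A * exp (s * x)) ^ 2 + (B * exp (-(s * x))) ^ 2) := by
          gcongr; exact two_mul_abs_mul_le_sq_add_sq A B (s * x)
  have hgrowth {i j : ℕ} (hij : i < j) : s * L + s * ((i + 1 / 2) * L) ≤ s * ((j + 1 / 2) * L) := by
    have : (i : ℝ) + 1 ≤ j := by exact_mod_cast hij
    have := mul_le_mul_of_nonneg_left this (mul_nonneg hs.le hL)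
    linarith
  simp only [tubeEnergy_eq A B L hs.ne']
  refine le_mul_add_of_outer_growth ?_ ?_ (hcross _) (hcross _) (hcross _) ?_ ?_ hε hκε
  iterate 2 positivity
  · rw [mul_left_comm]
    exact mul_le_mul_of_nonneg_left (exp_two_mul_mul_sq_le A (hgrowth h₂₃)) hq0
  · rw [mul_left_comm]
    exact mul_le_mul_of_nonneg_left (exp_two_mul_mul_sq_le B (by linarith [hgrowth h₁₂])) hq0

theorem single_mode_three_circles_general (m β : ℝ) (hm : 0 < m) (hβm : β < m) :
    ∃ L₀ > 0, ∀ L ≥ L₀, ∀ μ : ℝ, m ^ 2 ≤ μ → ∀ aP aM : ℝ, ∀ t₁ t₂ t₃ : ℕ,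
      t₁ < t₂ → t₂ < t₃ →
      (∫ r in ((t₂ : ℝ) * L)..(((t₂ : ℝ) + 1) * L),
          (aP * Real.exp (Real.sqrt μ * r) + aM * Real.exp (-(Real.sqrt μ) * r)) ^ 2) ≤
        Real.exp (-(2 * β * L)) *
          ((∫ r in ((t₁ : ℝ) * L)..(((t₁ : ℝ) + 1) * L),
              (aP * Real.exp (Real.sqrt μ * r) + aM * Real.exp (-(Real.sqrt μ) * r)) ^ 2) +
           (∫ r in ((t₃ : ℝ) * L)..(((t₃ : ℝ) + 1) * L),
              (aP * Real.exp (Real.sqrt μ * r) + aM * Real.exp (-(Real.sqrt μ) * r)) ^ 2)) := by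
  have hmβ : 0 < m - β := sub_pos.2 hβm
  refine ⟨10 / m + 1 / (m - β), by positivity, ?_⟩
  intro L hL μ hμ aP aM t₁ t₂ t₃ h₁₂ h₂₃
  have hms : m ≤ √μ := (le_sqrt' hm).2 hμ
  have hL₀ : 0 ≤ L := le_trans (by positivity) hL
  have hmL : 10 ≤ m * L := by
    rw [← div_le_iff₀' hm]; linarith [one_div_pos.2 hmβ]
  have hβL : 1 ≤ (m - β) * L := by
    rw [← div_le_iff₀' hmβ]; linarith [div_pos (by norm_num : (0 : ℝ) < 10) hm]
  refine tubeEnergy_le_mul_add aP aM (hm.trans_le hms) hL₀ (three_mul_le_sinh ?_) (exp_pos _).le ?_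
    h₁₂ h₂₃
  · exact hmL.trans (mul_le_mul_of_nonneg_right hms hL₀)
  · rw [← exp_add]
    linarith [add_one_le_exp (2 * (√μ * L) + -(2 * β * L)), mul_le_mul_of_nonneg_right hms hL₀]

/-- Single-mode three circles theorem: for each eigenvalue `μ ≥ m²`, the mode
`f(r) = a⁺ e^{√μ r} + a⁻ e^{-√μ r}` has its squared `L²`-norm on the middle tube
exponentially dominated by the norms on the outer tubes, once `L` is large. -/
theorem single_mode_three_circles (m β : ℝ) (hm : 0 < m) (hβ : 0 < β) (hβm : β < m) :
    ∃ L₀ > 0, ∀ L ≥ L₀, ∀ μ : ℝ, m ^ 2 ≤ μ → ∀ aP aM : ℝ, ∀ t₁ t₂ t₃ : ℕ,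
      t₁ < t₂ → t₂ < t₃ →
      (∫ r in ((t₂ : ℝ) * L)..(((t₂ : ℝ) + 1) * L),
          (aP * Real.exp (Real.sqrt μ * r) + aM * Real.exp (-(Real.sqrt μ) * r)) ^ 2) ≤
        Real.exp (-(2 * β * L)) *
          ((∫ r in ((t₁ : ℝ) * L)..(((t₁ : ℝ) + 1) * L),
              (aP * Real.exp (Real.sqrt μ * r) + aM * Real.exp (-(Real.sqrt μ) * r)) ^ 2) +
           (∫ r in ((t₃ : ℝ) * L)..(((t₃ : ℝ) + 1) * L),
              (aP * Real.exp (Real.sqrt μ * r) + aM * Real.exp (-(Real.sqrt μ) * r)) ^ 2)) :=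
  single_mode_three_circles_general m β hm hβm
end

section
/- Let m > 0 and 0 < β < m. There exists L₀ > 0 (depending only on β and m) such that the following holds for every L ≥ L₀. Let (μᵢ)_{i≥1} be real numbers with μᵢ ≥ m² for all i, let (aᵢ⁺), (aᵢ⁻) be real sequences, let c ∈ ℝ, and let t₁ < t₂ < t₃ be natural numbers. Let β' > 0 satisfy β' ≤ β and exp(2β'L)·(t₂² + t₂ + 1/3) ≤ t₃² + t₃ + 1/3. Assume that for j = 1,2,3 the series Σᵢ ∫_{t_jL}^{(t_j+1)L} (aᵢ⁺ e^{√μᵢ r} + aᵢ⁻ e^{−√μᵢ r})² dr converges, and define N_j = ( c²·∫_{t_jL}^{(t_j+1)L} r² dr + Σᵢ ∫_{t_jL}^{(t_j+1)L} (aᵢ⁺ e^{√μᵢ r} + aᵢ⁻ e^{−√μᵢ r})² dr )^{1/2}. Then N₂ ≤ exp(−β'L)·(N₁ + N₃). -/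
/-!
Each mode `f r = a e^{kr} + b e^{-kr}` satisfies the three-point identity
`sinh (k (s' + s)) f r = sinh (k s) f (r - s') + sinh (k s') f (r + s)`. Together with
Cauchy–Schwarz and `sinh x ≤ 2 e^{-y} sinh (x + y)` (for `x, y ≥ 0`) this gives
`f r ² ≤ 4 (e^{-2ks} + e^{-2ks'}) (f (r - s') ² + f (r + s) ²)`; integrating over the middle tube
and shifting to the outer ones yields the decay factor `8 e^{-2mL} ≤ e^{-2βL}` for every mode once
`L ≥ log 8 / (2 (m - β))`. The linear mode contributes `c² L³ (t² + t + 1/3)`, which the growth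
hypothesis controls. Summing over modes bounds `N₂²` by `e^{-2β'L} (N₁² + N₃²)`; take square roots.
-/

open MeasureTheory Real

noncomputable def expMode (a b k r : ℝ) : ℝ := a * exp (k * r) + b * exp (-k * r)

theorem sinh_mul_expMode (a b k s s' r : ℝ) :
    sinh (k * (s' + s)) * expMode a b k r =
      sinh (k * s) * expMode a b k (r - s') + sinh (k * s') * expMode a b k (r + s) := by
  simp only [expMode, sinh_eq, mul_add, mul_sub, neg_mul, neg_add, exp_add, exp_sub, exp_neg]
  field_simp
  ring

theorem sq_sinh_le_exp_mul_sq_sinh_add {x y : ℝ} (hx : 0 ≤ x) (hy : 0 ≤ y) :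
    sinh x ^ 2 ≤ 4 * exp (-(2 * y)) * sinh (x + y) ^ 2 := by
  have hsinh : 0 ≤ sinh x := sinh_nonneg_iff.2 hx
  have hcosh : exp y / 2 ≤ cosh y := by rw [cosh_eq]; linarith [exp_pos (-y)]
  have hadd : sinh x * cosh y ≤ sinh (x + y) := by
    rw [sinh_add]; linarith [mul_nonneg (cosh_pos x).le (sinh_nonneg_iff.2 hy)]
  calc sinh x ^ 2 = 4 * exp (-(2 * y)) * (sinh x * (exp y / 2)) ^ 2 := by
        rw [show -(2 * y) = -y + -y by ring, exp_add, exp_neg]; field_simp; norm_num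
    _ ≤ 4 * exp (-(2 * y)) * sinh (x + y) ^ 2 := by
        gcongr
        exact (mul_le_mul_of_nonneg_left hcosh hsinh).trans hadd

theorem sq_expMode_le {a b k s s' : ℝ} (hk : 0 < k) (hs : 0 < s) (hs' : 0 < s') (r : ℝ) :
    expMode a b k r ^ 2 ≤ 4 * (exp (-(2 * (k * s))) + exp (-(2 * (k * s')))) *
      (expMode a b k (r - s') ^ 2 + expMode a b k (r + s) ^ 2) := by
  set D := sinh (k * (s' + s))
  set u := expMode a b k (r - s')
  set v := expMode a b k (r + s)
  have hD : 0 < D := sinh_pos_iff.2 (by positivity)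
  have hα := sq_sinh_le_exp_mul_sq_sinh_add (mul_pos hk hs).le (mul_pos hk hs').le
  have hγ := sq_sinh_le_exp_mul_sq_sinh_add (mul_pos hk hs').le (mul_pos hk hs).le
  rw [← mul_add, add_comm s] at hα
  rw [← mul_add] at hγ
  have hcs : (sinh (k * s) * u + sinh (k * s') * v) ^ 2 ≤
      (sinh (k * s) ^ 2 + sinh (k * s') ^ 2) * (u ^ 2 + v ^ 2) := by
    nlinarith [sq_nonneg (sinh (k * s) * v - sinh (k * s') * u)]
  refine le_of_mul_le_mul_left ?_ (pow_pos hD 2)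
  calc D ^ 2 * expMode a b k r ^ 2 = (sinh (k * s) * u + sinh (k * s') * v) ^ 2 := by
        rw [← mul_pow, sinh_mul_expMode]
    _ ≤ (sinh (k * s) ^ 2 + sinh (k * s') ^ 2) * (u ^ 2 + v ^ 2) := hcs
    _ ≤ (4 * exp (-(2 * (k * s'))) * D ^ 2 + 4 * exp (-(2 * (k * s))) * D ^ 2) *
          (u ^ 2 + v ^ 2) := by
        gcongr
    _ = _ := by ring

theorem intervalIntegral_le_mul_shift_add {F : ℝ → ℝ} {a b s s' C : ℝ} (hF : Continuous F)
    (hab : a ≤ b) (h : ∀ r ∈ Set.Icc a b, F r ≤ C * (F (r - s') + F (r + s))) :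
    ∫ r in a..b, F r ≤ C * ((∫ r in a - s'..b - s', F r) + ∫ r in a + s..b + s, F r) := by
  have hleft : Continuous fun r => F (r - s') := hF.comp (by fun_prop)
  have hright : Continuous fun r => F (r + s) := hF.comp (by fun_prop)
  calc ∫ r in a..b, F r ≤ ∫ r in a..b, C * (F (r - s') + F (r + s)) :=
        intervalIntegral.integral_mono_on hab (hF.intervalIntegrable _ _)
          (((hleft.add hright).const_mul C).intervalIntegrable _ _) h
    _ = _ := by
        rw [intervalIntegral.integral_const_mul,
          intervalIntegral.integral_add (hleft.intervalIntegrable _ _)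
            (hright.intervalIntegrable _ _),
          intervalIntegral.integral_comp_sub_right, intervalIntegral.integral_comp_add_right]

noncomputable def tubeIntegral (F : ℝ → ℝ) (L t : ℝ) : ℝ := ∫ r in t * L..(t + 1) * L, F r

theorem tubeIntegral_nonneg {F : ℝ → ℝ} {L : ℝ} (hF : ∀ r, 0 ≤ F r) (hL : 0 ≤ L) (t : ℝ) :
    0 ≤ tubeIntegral F L t :=
  intervalIntegral.integral_nonneg (by nlinarith) fun r _ => hF r

theorem tubeIntegral_sq (L t : ℝ) :
    tubeIntegral (· ^ 2) L t = L ^ 3 * (t ^ 2 + t + 1 / 3) := by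
  rw [tubeIntegral, integral_pow]
  ring

theorem tubeIntegral_le_mul_add {F : ℝ → ℝ} {L C t₁ t₂ t₃ : ℝ} (hF : Continuous F)
    (hL : 0 ≤ L) (h : ∀ r, F r ≤ C * (F (r - (t₂ - t₁) * L) + F (r + (t₃ - t₂) * L))) :
    tubeIntegral F L t₂ ≤ C * (tubeIntegral F L t₁ + tubeIntegral F L t₃) := by
  have key := intervalIntegral_le_mul_shift_add hF (by nlinarith : t₂ * L ≤ (t₂ + 1) * L)
    fun r _ => h r
  unfold tubeIntegral
  convert key using 4 <;> ring

theorem tubeIntegral_sq_expMode_le {m L a b k t₁ t₂ t₃ : ℝ} (hm : 0 < m) (hL : 0 < L)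
    (hk : m ≤ k) (h12 : t₁ + 1 ≤ t₂) (h23 : t₂ + 1 ≤ t₃) :
    tubeIntegral (expMode a b k · ^ 2) L t₂ ≤ 8 * exp (-(2 * (m * L))) *
      (tubeIntegral (expMode a b k · ^ 2) L t₁ + tubeIntegral (expMode a b k · ^ 2) L t₃) := by
  have hs : m * L ≤ k * ((t₃ - t₂) * L) :=
    mul_le_mul hk (le_mul_of_one_le_left hL.le (by linarith)) hL.le (hm.le.trans hk)
  have hs' : m * L ≤ k * ((t₂ - t₁) * L) :=
    mul_le_mul hk (le_mul_of_one_le_left hL.le (by linarith)) hL.le (hm.le.trans hk)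
  have hmode := tubeIntegral_le_mul_add (by unfold expMode; fun_prop) hL.le fun r =>
    sq_expMode_le (a := a) (b := b) (hm.trans_le hk) (by nlinarith : 0 < (t₃ - t₂) * L)
      (by nlinarith : 0 < (t₂ - t₁) * L) r
  refine hmode.trans (mul_le_mul_of_nonneg_right ?_ (add_nonneg
    (tubeIntegral_nonneg (fun _ => sq_nonneg _) hL.le _)
    (tubeIntegral_nonneg (fun _ => sq_nonneg _) hL.le _)))
  have h₁ := exp_le_exp.2 (neg_le_neg (mul_le_mul_of_nonneg_left hs zero_le_two))
  have h₂ := exp_le_exp.2 (neg_le_neg (mul_le_mul_of_nonneg_left hs' zero_le_two))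
  linarith

theorem tsum_le_mul_tsum_add {ι : Type*} {f g h : ι → ℝ} {C : ℝ} (hf : Summable f)
    (hg : Summable g) (hh : Summable h) (hle : ∀ i, f i ≤ C * (g i + h i)) :
    ∑' i, f i ≤ C * (∑' i, g i + ∑' i, h i) := by
  rw [← hg.tsum_add hh, ← tsum_mul_left]
  exact hf.tsum_le_tsum hle ((hg.add hh).mul_left C)

theorem sqrt_le_mul_sqrt_add_sqrt {x y z ε : ℝ} (hy : 0 ≤ y) (hz : 0 ≤ z) (hε : 0 ≤ ε)
    (h : x ≤ ε ^ 2 * (y + z)) : √x ≤ ε * (√y + √z) := by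
  refine sqrt_le_iff.2 ⟨by positivity, h.trans ?_⟩
  rw [mul_pow]
  gcongr
  nlinarith [sq_sqrt hy, sq_sqrt hz, sqrt_nonneg y, sqrt_nonneg z]

theorem eight_mul_exp_le_exp {m β L : ℝ} (hβm : β < m) (hL : log 8 / (2 * (m - β)) ≤ L) :
    8 * exp (-(2 * (m * L))) ≤ exp (-(2 * β * L)) := by
  rw [div_le_iff₀ (by linarith)] at hL
  calc 8 * exp (-(2 * (m * L))) = exp (log 8 - 2 * (m * L)) := by
        rw [exp_sub, exp_log (by norm_num), exp_neg, div_eq_mul_inv]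
    _ ≤ exp (-(2 * β * L)) := exp_le_exp.2 (by linarith)

/-- `N_t²` for the tube `[tL, (t + 1)L]`. -/
noncomputable def tubeNormSq (c : ℝ) (μ aP aM : ℕ → ℝ) (L t : ℝ) : ℝ :=
  c ^ 2 * tubeIntegral (· ^ 2) L t +
    ∑' i, tubeIntegral (expMode (aP i) (aM i) √(μ i) · ^ 2) L t

theorem tubeNormSq_nonneg (c : ℝ) (μ aP aM : ℕ → ℝ) {L : ℝ} (hL : 0 ≤ L) (t : ℝ) :
    0 ≤ tubeNormSq c μ aP aM L t :=
  add_nonneg (mul_nonneg (sq_nonneg c) (tubeIntegral_nonneg (fun _ => sq_nonneg _) hL t))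
    (tsum_nonneg fun _ => tubeIntegral_nonneg (fun _ => sq_nonneg _) hL t)

theorem tubeNormSq_le {m L ε c t₁ t₂ t₃ : ℝ} {μ aP aM : ℕ → ℝ} (hm : 0 < m) (hL : 0 < L)
    (hμ : ∀ i, m ^ 2 ≤ μ i) (h12 : t₁ + 1 ≤ t₂) (h23 : t₂ + 1 ≤ t₃)
    (hε : 8 * exp (-(2 * (m * L))) ≤ ε)
    (hgrowth : t₂ ^ 2 + t₂ + 1 / 3 ≤ ε * (t₃ ^ 2 + t₃ + 1 / 3))
    (hsum₁ : Summable fun i => tubeIntegral (expMode (aP i) (aM i) √(μ i) · ^ 2) L t₁)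
    (hsum₂ : Summable fun i => tubeIntegral (expMode (aP i) (aM i) √(μ i) · ^ 2) L t₂)
    (hsum₃ : Summable fun i => tubeIntegral (expMode (aP i) (aM i) √(μ i) · ^ 2) L t₃) :
    tubeNormSq c μ aP aM L t₂ ≤ ε * (tubeNormSq c μ aP aM L t₁ + tubeNormSq c μ aP aM L t₃) := by
  have hmodes := tsum_le_mul_tsum_add hsum₂ hsum₁ hsum₃ fun i =>
    (tubeIntegral_sq_expMode_le hm hL (le_sqrt_of_sq_le (hμ i)) h12 h23).trans
      (mul_le_mul_of_nonneg_right hε (add_nonneg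
        (tubeIntegral_nonneg (fun _ => sq_nonneg _) hL.le _)
        (tubeIntegral_nonneg (fun _ => sq_nonneg _) hL.le _)))
  have hlinear :
      c ^ 2 * tubeIntegral (· ^ 2) L t₂ ≤ ε * (c ^ 2 * tubeIntegral (· ^ 2) L t₃) := by
    simp only [tubeIntegral_sq]
    have := mul_le_mul_of_nonneg_left hgrowth (by positivity : 0 ≤ c ^ 2 * L ^ 3)
    linarith
  have hlinear₁ : 0 ≤ ε * (c ^ 2 * tubeIntegral (· ^ 2) L t₁) :=
    mul_nonneg ((by positivity : (0 : ℝ) ≤ 8 * exp _).trans hε)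
      (mul_nonneg (sq_nonneg c) (tubeIntegral_nonneg (fun _ => sq_nonneg _) hL.le _))
  unfold tubeNormSq
  linarith

theorem three_circles_scalar_general (m β : ℝ) (hβm : β < m) :
    ∃ L₀ > 0, ∀ L ≥ L₀, ∀ μ : ℕ → ℝ, (∀ i, m ^ 2 ≤ μ i) →
      ∀ aP aM : ℕ → ℝ, ∀ c : ℝ, ∀ t₁ t₂ t₃ : ℕ, t₁ < t₂ → t₂ < t₃ →
      ∀ β' : ℝ, 0 < β' → β' ≤ β →
      Real.exp (2 * β' * L) * ((t₂ : ℝ) ^ 2 + (t₂ : ℝ) + 1 / 3) ≤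
        (t₃ : ℝ) ^ 2 + (t₃ : ℝ) + 1 / 3 →
      (∀ j ∈ ({t₁, t₂, t₃} : Set ℕ),
        Summable fun i : ℕ =>
          ∫ r in ((j : ℝ) * L)..(((j : ℝ) + 1) * L),
            (aP i * Real.exp (Real.sqrt (μ i) * r) +
              aM i * Real.exp (-(Real.sqrt (μ i)) * r)) ^ 2) →
      Real.sqrt (c ^ 2 * (∫ r in ((t₂ : ℝ) * L)..(((t₂ : ℝ) + 1) * L), r ^ 2) +
          ∑' i : ℕ, ∫ r in ((t₂ : ℝ) * L)..(((t₂ : ℝ) + 1) * L),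
            (aP i * Real.exp (Real.sqrt (μ i) * r) +
              aM i * Real.exp (-(Real.sqrt (μ i)) * r)) ^ 2) ≤
        Real.exp (-(β' * L)) *
          (Real.sqrt (c ^ 2 * (∫ r in ((t₁ : ℝ) * L)..(((t₁ : ℝ) + 1) * L), r ^ 2) +
              ∑' i : ℕ, ∫ r in ((t₁ : ℝ) * L)..(((t₁ : ℝ) + 1) * L),
                (aP i * Real.exp (Real.sqrt (μ i) * r) +
                  aM i * Real.exp (-(Real.sqrt (μ i)) * r)) ^ 2) +
           Real.sqrt (c ^ 2 * (∫ r in ((t₃ : ℝ) * L)..(((t₃ : ℝ) + 1) * L), r ^ 2) +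
              ∑' i : ℕ, ∫ r in ((t₃ : ℝ) * L)..(((t₃ : ℝ) + 1) * L),
                (aP i * Real.exp (Real.sqrt (μ i) * r) +
                  aM i * Real.exp (-(Real.sqrt (μ i)) * r)) ^ 2)) := by
  have hL₀ : 0 < log 8 / (2 * (m - β)) := div_pos (log_pos (by norm_num)) (by linarith)
  refine ⟨_, hL₀, fun L hL μ hμ aP aM c t₁ t₂ t₃ h12 h23 β' hβ' hβ'β hgrowth hsum => ?_⟩
  have hm : 0 < m := by linarith
  have hLpos : 0 < L := hL₀.trans_le hL
  have hε : 8 * exp (-(2 * (m * L))) ≤ exp (-(2 * β' * L)) :=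
    (eight_mul_exp_le_exp hβm hL).trans (exp_le_exp.2 (by nlinarith))
  have hgrowth' :
      (t₂ : ℝ) ^ 2 + t₂ + 1 / 3 ≤ exp (-(2 * β' * L)) * (t₃ ^ 2 + t₃ + 1 / 3) := by
    rw [exp_neg, inv_mul_eq_div, le_div_iff₀ (exp_pos _)]
    linarith
  have hN := tubeNormSq_le (c := c) hm hLpos hμ (by exact_mod_cast h12) (by exact_mod_cast h23)
    hε hgrowth' (hsum t₁ (by simp)) (hsum t₂ (by simp)) (hsum t₃ (by simp))
  rw [show exp (-(2 * β' * L)) = exp (-(β' * L)) ^ 2 by rw [← exp_nat_mul]; ring_nf] at hN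
  exact sqrt_le_mul_sqrt_add_sqrt (tubeNormSq_nonneg _ _ _ _ hLpos.le _)
    (tubeNormSq_nonneg _ _ _ _ hLpos.le _) (exp_pos _).le hN

/-- Scalar form of the three circles theorem (Theorem 6.3): the `L²`-norm `N_j` over
the tube `[t_jL,(t_j+1)L]` of a sum of a linear mode `c·r` and exponential modes
`aᵢ⁺ e^{√μᵢ r} + aᵢ⁻ e^{-√μᵢ r}` with `μᵢ ≥ m²` satisfies `N₂ ≤ e^{-β'L}(N₁ + N₃)`. -/
theorem three_circles_scalar (m β : ℝ) (hm : 0 < m) (hβ : 0 < β) (hβm : β < m) :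
    ∃ L₀ > 0, ∀ L ≥ L₀, ∀ μ : ℕ → ℝ, (∀ i, m ^ 2 ≤ μ i) →
      ∀ aP aM : ℕ → ℝ, ∀ c : ℝ, ∀ t₁ t₂ t₃ : ℕ, t₁ < t₂ → t₂ < t₃ →
      ∀ β' : ℝ, 0 < β' → β' ≤ β →
      Real.exp (2 * β' * L) * ((t₂ : ℝ) ^ 2 + (t₂ : ℝ) + 1 / 3) ≤
        (t₃ : ℝ) ^ 2 + (t₃ : ℝ) + 1 / 3 →
      (∀ j ∈ ({t₁, t₂, t₃} : Set ℕ),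
        Summable fun i : ℕ =>
          ∫ r in ((j : ℝ) * L)..(((j : ℝ) + 1) * L),
            (aP i * Real.exp (Real.sqrt (μ i) * r) +
              aM i * Real.exp (-(Real.sqrt (μ i)) * r)) ^ 2) →
      Real.sqrt (c ^ 2 * (∫ r in ((t₂ : ℝ) * L)..(((t₂ : ℝ) + 1) * L), r ^ 2) +
          ∑' i : ℕ, ∫ r in ((t₂ : ℝ) * L)..(((t₂ : ℝ) + 1) * L),
            (aP i * Real.exp (Real.sqrt (μ i) * r) +
              aM i * Real.exp (-(Real.sqrt (μ i)) * r)) ^ 2) ≤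
        Real.exp (-(β' * L)) *
          (Real.sqrt (c ^ 2 * (∫ r in ((t₁ : ℝ) * L)..(((t₁ : ℝ) + 1) * L), r ^ 2) +
              ∑' i : ℕ, ∫ r in ((t₁ : ℝ) * L)..(((t₁ : ℝ) + 1) * L),
                (aP i * Real.exp (Real.sqrt (μ i) * r) +
                  aM i * Real.exp (-(Real.sqrt (μ i)) * r)) ^ 2) +
           Real.sqrt (c ^ 2 * (∫ r in ((t₃ : ℝ) * L)..(((t₃ : ℝ) + 1) * L), r ^ 2) +
              ∑' i : ℕ, ∫ r in ((t₃ : ℝ) * L)..(((t₃ : ℝ) + 1) * L),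
                (aP i * Real.exp (Real.sqrt (μ i) * r) +
                  aM i * Real.exp (-(Real.sqrt (μ i)) * r)) ^ 2)) :=
  three_circles_scalar_general m β hβm
end

section
/- Let (x_j)_{j∈ℕ} be a sequence of nonnegative real numbers and let κ > 0 and λ ≥ κ + 1/κ be real numbers such that λ·x_j ≤ x_{j−1} + x_{j+1} for all j ≥ 1. If for some j ≥ 1 one has x_j ≥ κ·x_{j+1}, then x_{j−1} ≥ κ·x_j. -/
theorem le_of_add_inv_mul_le_add {κ a b c : ℝ} (hκ : 0 < κ) (h : (κ + κ⁻¹) * b ≤ a + c)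
    (hc : κ * c ≤ b) : κ * b ≤ a := by
  have hc' : c ≤ κ⁻¹ * b := (le_inv_mul_iff₀ hκ).mpr hc
  linarith

/-- Backward monotonicity (decreasing case of Remark 6.4): if
`λ·x_j ≤ x_{j-1} + x_{j+1}` for all `j ≥ 1` with `κ > 0` and `λ ≥ κ + 1/κ`, then once
`x_j ≥ κ·x_{j+1}` at some `j ≥ 1`, also `x_{j-1} ≥ κ·x_j`. -/
theorem discrete_three_circles_backward (x : ℕ → ℝ) (hx : ∀ j, 0 ≤ x j)
    (κ lam : ℝ) (hκ : 0 < κ) (hlam : κ + 1 / κ ≤ lam)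
    (h3c : ∀ j : ℕ, 1 ≤ j → lam * x j ≤ x (j - 1) + x (j + 1)) :
    ∀ j : ℕ, 1 ≤ j → κ * x (j + 1) ≤ x j → κ * x j ≤ x (j - 1) := by
  intro j hj hdecay
  rw [one_div] at hlam
  refine le_of_add_inv_mul_le_add hκ ?_ hdecay
  calc (κ + κ⁻¹) * x j ≤ lam * x j := mul_le_mul_of_nonneg_right hlam (hx j)
    _ ≤ x (j - 1) + x (j + 1) := h3c j hj
end

section
/- Let (x_j)_{j∈ℕ} be a sequence of nonnegative real numbers and let κ > 0 and λ ≥ κ + 1/κ be real numbers such that λ·x_j ≤ x_{j−1} + x_{j+1} for all j ≥ 1. If for some j₀ ≥ 1 one has x_{j₀} ≥ κ·x_{j₀−1}, then for all i ≥ 0, x_{j₀+i} ≥ κ^i·x_{j₀}. -/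
/-! Since `λ ≥ κ + 1/κ`, the three-circles inequality at `j` turns the ratio bound
`x_{j-1} ≤ x_j / κ` into `κ x_j ≤ x_{j+1}`; so once the ratio `x_j / x_{j-1}` reaches `κ` it stays
at least `κ`, and the sequence grows at least geometrically from there. -/

theorem mul_le_of_three_circles_step {κ lam a b c : ℝ} (hκ : 0 < κ) (hlam : κ + 1 / κ ≤ lam)
    (hb : 0 ≤ b) (h3c : lam * b ≤ a + c) (hab : κ * a ≤ b) : κ * b ≤ c := by
  have ha : a ≤ b / κ := (le_div_iff₀' hκ).2 hab
  calc κ * b = (κ + 1 / κ) * b - b / κ := by ring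
    _ ≤ lam * b - b / κ := by gcongr
    _ ≤ c := by linarith

theorem three_circles_ratio_persists {x : ℕ → ℝ} (hx : ∀ j, 0 ≤ x j) {κ lam : ℝ} (hκ : 0 < κ)
    (hlam : κ + 1 / κ ≤ lam) (h3c : ∀ j : ℕ, 1 ≤ j → lam * x j ≤ x (j - 1) + x (j + 1))
    {j₀ : ℕ} (hj₀ : 1 ≤ j₀) (hstart : κ * x (j₀ - 1) ≤ x j₀) :
    ∀ j, j₀ ≤ j → κ * x (j - 1) ≤ x j := by
  intro j hj
  induction j, hj using Nat.le_induction with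
  | base => exact hstart
  | succ j hj ih =>
    rw [Nat.add_sub_cancel]
    exact mul_le_of_three_circles_step hκ hlam (hx j) (h3c j (hj₀.trans hj)) ih

/-- Geometric growth consequence of the discrete three-circles inequality: if
`λ·x_j ≤ x_{j-1} + x_{j+1}` for all `j ≥ 1` with `κ > 0` and `λ ≥ κ + 1/κ`, and
`x_{j₀} ≥ κ·x_{j₀-1}` at some `j₀ ≥ 1`, then `x_{j₀+i} ≥ κ^i·x_{j₀}` for all `i`. -/
theorem discrete_three_circles_geometric_growth (x : ℕ → ℝ) (hx : ∀ j, 0 ≤ x j)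
    (κ lam : ℝ) (hκ : 0 < κ) (hlam : κ + 1 / κ ≤ lam)
    (h3c : ∀ j : ℕ, 1 ≤ j → lam * x j ≤ x (j - 1) + x (j + 1)) :
    ∀ j₀ : ℕ, 1 ≤ j₀ → κ * x (j₀ - 1) ≤ x j₀ → ∀ i : ℕ, κ ^ i * x j₀ ≤ x (j₀ + i) := by
  intro j₀ hj₀ hstart i
  have hratio := three_circles_ratio_persists hx hκ hlam h3c hj₀ hstart
  refine geom_le (u := fun k => x (j₀ + k)) hκ.le i fun k _ => ?_
  exact hratio (j₀ + k + 1) (by omega)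
end

section
/- Let μ > 0, let ρ ∈ ℝ with |ρ| < √μ, let K ≥ 0, and let f : ℝ → ℝ be continuous with |f(s)| ≤ K·exp(−ρ·s) for all s ∈ ℝ. Define F(t) = −(1/(2√μ))·∫_ℝ exp(−√μ·|t−s|)·f(s) ds. Then F is twice differentiable on ℝ, F''(t) − μ·F(t) = f(t) for all t ∈ ℝ, and |F(t)| ≤ K·exp(−ρ·t)/(μ − ρ²) for all t ∈ ℝ. -/
/-!
With `c = √μ`, splitting the integral at `s = t` gives `-2c F(t) = e^{-ct} L(t) + e^{ct} R(t)`,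
where `L(t) = ∫_{s ≤ t} e^{cs} f(s) ds` and `R(t) = ∫_{s > t} e^{-cs} f(s) ds`. Since `|ρ| < c`,
both integrands are dominated by exponentials decaying at the open end, so `L` and `R` exist,
`L' = e^{ct} f`, `R' = -e^{-ct} f`, `|L(t)| ≤ K e^{(c-ρ)t}/(c-ρ)` and
`|R(t)| ≤ K e^{-(c+ρ)t}/(c+ρ)`. The `f`-terms cancel in the first derivative of
`e^{-ct} L + e^{ct} R` and add up in the second, which gives `F'' = c² F + f`; the two bounds add up
to `2c K e^{-ρt}/(c² - ρ²)`.
-/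

open MeasureTheory Real Set

section HalfLineIntegrals

variable {g : ℝ → ℝ}

theorem hasDerivAt_integral_Iic (hg : Continuous g) (hint : ∀ t, IntegrableOn g (Iic t))
    (t : ℝ) : HasDerivAt (fun u => ∫ s in Iic u, g s) (g t) t := by
  have hsplit : (fun u => ∫ s in Iic u, g s) =
      fun u => (∫ s in Iic 0, g s) + ∫ s in 0..u, g s := by
    funext u
    rw [← intervalIntegral.integral_Iic_sub_Iic (hint 0) (hint u), add_sub_cancel]
  rw [hsplit]
  exact (hg.integral_hasStrictDerivAt 0 t).hasDerivAt.const_add _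

theorem hasDerivAt_integral_Ioi (hg : Continuous g) (hint : ∀ t, IntegrableOn g (Ioi t))
    (t : ℝ) : HasDerivAt (fun u => ∫ s in Ioi u, g s) (-g t) t := by
  have hsplit : (fun u => ∫ s in Ioi u, g s) =
      fun u => (∫ s in Ioi 0, g s) - ∫ s in 0..u, g s := by
    funext u
    rw [← intervalIntegral.integral_Ioi_sub_Ioi' (hint 0) (hint u), sub_sub_cancel]
  rw [hsplit]
  exact (hg.integral_hasStrictDerivAt 0 t).hasDerivAt.const_sub _

variable {K a : ℝ}

theorem integrableOn_Iic_of_abs_le_exp (hg : AEStronglyMeasurable g)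
    (hbd : ∀ s, |g s| ≤ K * exp (a * s)) (ha : 0 < a) (t : ℝ) : IntegrableOn g (Iic t) :=
  ((integrableOn_exp_mul_Iic ha t).const_mul K).mono' hg.restrict (ae_of_all _ hbd)

theorem integrableOn_Ioi_of_abs_le_exp (hg : AEStronglyMeasurable g)
    (hbd : ∀ s, |g s| ≤ K * exp (a * s)) (ha : a < 0) (t : ℝ) : IntegrableOn g (Ioi t) :=
  ((integrableOn_exp_mul_Ioi ha t).const_mul K).mono' hg.restrict (ae_of_all _ hbd)

theorem abs_integral_Iic_le_of_abs_le_exp (hbd : ∀ s, |g s| ≤ K * exp (a * s)) (ha : 0 < a)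
    (t : ℝ) :
    |∫ s in Iic t, g s| ≤ K * exp (a * t) / a := by
  have h := norm_integral_le_of_norm_le (f := g) ((integrableOn_exp_mul_Iic ha t).const_mul K)
    (ae_of_all _ hbd)
  rwa [integral_const_mul, integral_exp_mul_Iic ha, ← mul_div_assoc] at h

theorem abs_integral_Ioi_le_of_abs_le_exp (hbd : ∀ s, |g s| ≤ K * exp (a * s)) (ha : a < 0)
    (t : ℝ) :
    |∫ s in Ioi t, g s| ≤ K * exp (a * t) / -a := by
  have h := norm_integral_le_of_norm_le (f := g) ((integrableOn_exp_mul_Ioi ha t).const_mul K)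
    (ae_of_all _ hbd)
  rwa [integral_const_mul, integral_exp_mul_Ioi ha, neg_div, ← div_neg, ← mul_div_assoc]
    at h

end HalfLineIntegrals

theorem abs_exp_mul_mul_le {f : ℝ → ℝ} {K ρ : ℝ} (hbd : ∀ s, |f s| ≤ K * exp (-(ρ * s)))
    (b s : ℝ) : |exp (b * s) * f s| ≤ K * exp ((b - ρ) * s) := by
  rw [abs_mul, abs_of_pos (exp_pos _)]
  calc exp (b * s) * |f s| ≤ exp (b * s) * (K * exp (-(ρ * s))) :=
        mul_le_mul_of_nonneg_left (hbd s) (exp_pos _).le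
    _ = K * exp ((b - ρ) * s) := by rw [mul_left_comm, ← exp_add]; ring_nf

section GreenFunction

variable (c : ℝ) (f : ℝ → ℝ)

noncomputable def greenLeft (t : ℝ) : ℝ := ∫ s in Iic t, exp (c * s) * f s

noncomputable def greenRight (t : ℝ) : ℝ := ∫ s in Ioi t, exp (-c * s) * f s

noncomputable def greenSum (t : ℝ) : ℝ :=
  exp (-c * t) * greenLeft c f t + exp (c * t) * greenRight c f t

noncomputable def greenDiff (t : ℝ) : ℝ :=
  exp (c * t) * greenRight c f t - exp (-c * t) * greenLeft c f t

variable {c f}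

theorem integral_exp_neg_mul_abs_sub_mul_eq_greenSum {t : ℝ}
    (hL : IntegrableOn (fun s => exp (c * s) * f s) (Iic t))
    (hR : IntegrableOn (fun s => exp (-c * s) * f s) (Ioi t)) :
    ∫ s, exp (-c * |t - s|) * f s = greenSum c f t := by
  have hleft : EqOn (fun s => exp (-c * |t - s|) * f s)
      (fun s => exp (-c * t) * (exp (c * s) * f s)) (Iic t) := by
    intro s (hs : s ≤ t)
    dsimp only
    rw [abs_of_nonneg (sub_nonneg.2 hs), ← mul_assoc, ← exp_add]
    ring_nf
  have hright : EqOn (fun s => exp (-c * |t - s|) * f s)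
      (fun s => exp (c * t) * (exp (-c * s) * f s)) (Ioi t) := by
    intro s (hs : t < s)
    dsimp only
    rw [abs_of_neg (sub_neg.2 hs), ← mul_assoc, ← exp_add]
    ring_nf
  rw [← intervalIntegral.integral_Iic_add_Ioi
      (IntegrableOn.congr_fun (hL.const_mul _) hleft.symm measurableSet_Iic)
      (IntegrableOn.congr_fun (hR.const_mul _) hright.symm measurableSet_Ioi),
    setIntegral_congr_fun measurableSet_Iic hleft, setIntegral_congr_fun measurableSet_Ioi hright,
    integral_const_mul, integral_const_mul]
  rfl

theorem hasDerivAt_exp_mul (b t : ℝ) :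
    HasDerivAt (fun u => exp (b * u)) (exp (b * t) * b) t := by
  simpa using ((hasDerivAt_id t).const_mul b).exp

theorem hasDerivAt_greenLeft (hf : Continuous f)
    (hL : ∀ t, IntegrableOn (fun s => exp (c * s) * f s) (Iic t)) (t : ℝ) :
    HasDerivAt (greenLeft c f) (exp (c * t) * f t) t :=
  hasDerivAt_integral_Iic (by fun_prop) hL t

theorem hasDerivAt_greenRight (hf : Continuous f)
    (hR : ∀ t, IntegrableOn (fun s => exp (-c * s) * f s) (Ioi t)) (t : ℝ) :
    HasDerivAt (greenRight c f) (-(exp (-c * t) * f t)) t :=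
  hasDerivAt_integral_Ioi (by fun_prop) hR t

theorem hasDerivAt_greenSum (hf : Continuous f)
    (hL : ∀ t, IntegrableOn (fun s => exp (c * s) * f s) (Iic t))
    (hR : ∀ t, IntegrableOn (fun s => exp (-c * s) * f s) (Ioi t)) (t : ℝ) :
    HasDerivAt (greenSum c f) (c * greenDiff c f t) t :=
  (((hasDerivAt_exp_mul (-c) t).mul (hasDerivAt_greenLeft hf hL t)).add
    ((hasDerivAt_exp_mul c t).mul (hasDerivAt_greenRight hf hR t))).congr_deriv
    (by unfold greenDiff; ring)

theorem hasDerivAt_greenDiff (hf : Continuous f)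
    (hL : ∀ t, IntegrableOn (fun s => exp (c * s) * f s) (Iic t))
    (hR : ∀ t, IntegrableOn (fun s => exp (-c * s) * f s) (Ioi t)) (t : ℝ) :
    HasDerivAt (greenDiff c f) (c * greenSum c f t - 2 * f t) t := by
  refine (((hasDerivAt_exp_mul c t).mul (hasDerivAt_greenRight hf hR t)).sub
    ((hasDerivAt_exp_mul (-c) t).mul (hasDerivAt_greenLeft hf hL t))).congr_deriv ?_
  have hexp : exp (c * t) * exp (-c * t) = 1 := by rw [← exp_add]; simp
  unfold greenSum
  linear_combination (-2 * f t) * hexp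

theorem integrableOn_exp_mul_mul_Iic {K ρ : ℝ} (hf : Continuous f) (hρ : |ρ| < c)
    (hbd : ∀ s, |f s| ≤ K * exp (-(ρ * s))) (t : ℝ) :
    IntegrableOn (fun s => exp (c * s) * f s) (Iic t) :=
  integrableOn_Iic_of_abs_le_exp (by fun_prop : Continuous _).aestronglyMeasurable
    (abs_exp_mul_mul_le hbd c) (by linarith [le_abs_self ρ]) t

theorem integrableOn_exp_neg_mul_mul_Ioi {K ρ : ℝ} (hf : Continuous f) (hρ : |ρ| < c)
    (hbd : ∀ s, |f s| ≤ K * exp (-(ρ * s))) (t : ℝ) :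
    IntegrableOn (fun s => exp (-c * s) * f s) (Ioi t) :=
  integrableOn_Ioi_of_abs_le_exp (by fun_prop : Continuous _).aestronglyMeasurable
    (abs_exp_mul_mul_le hbd (-c)) (by linarith [neg_abs_le ρ]) t

theorem abs_greenSum_le {K ρ : ℝ} (hρ : |ρ| < c) (hbd : ∀ s, |f s| ≤ K * exp (-(ρ * s)))
    (t : ℝ) : |greenSum c f t| ≤ 2 * c * K * exp (-(ρ * t)) / (c ^ 2 - ρ ^ 2) := by
  obtain ⟨hρl, hρr⟩ := abs_lt.1 hρ
  have hcρ : 0 < c - ρ := by linarith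
  have hcρ' : 0 < c + ρ := by linarith
  have hleft := abs_integral_Iic_le_of_abs_le_exp (abs_exp_mul_mul_le hbd c) hcρ t
  have hright := abs_integral_Ioi_le_of_abs_le_exp (abs_exp_mul_mul_le hbd (-c))
    (by linarith : -c - ρ < 0) t
  have hexp_left : exp (-c * t) * exp ((c - ρ) * t) = exp (-(ρ * t)) := by
    rw [← exp_add]; ring_nf
  have hexp_right : exp (c * t) * exp ((-c - ρ) * t) = exp (-(ρ * t)) := by
    rw [← exp_add]; ring_nf
  calc |greenSum c f t|
      ≤ exp (-c * t) * |greenLeft c f t| + exp (c * t) * |greenRight c f t| := by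
        refine (abs_add_le _ _).trans_eq ?_
        rw [abs_mul, abs_mul, abs_of_pos (exp_pos _), abs_of_pos (exp_pos _)]
    _ ≤ exp (-c * t) * (K * exp ((c - ρ) * t) / (c - ρ))
        + exp (c * t) * (K * exp ((-c - ρ) * t) / -(-c - ρ)) := by
        gcongr
        exacts [hleft, hright]
    _ = K * exp (-(ρ * t)) / (c - ρ) + K * exp (-(ρ * t)) / (c + ρ) := by
        linear_combination K / (c - ρ) * hexp_left + K / (c + ρ) * hexp_right
    _ = 2 * c * K * exp (-(ρ * t)) / (c ^ 2 - ρ ^ 2) := by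
        rw [div_add_div _ _ hcρ.ne' hcρ'.ne']
        ring

end GreenFunction

theorem green_function_mode_ODE_general (μ ρ K : ℝ) (hμ : 0 < μ) (hρ : |ρ| < Real.sqrt μ)
    (f : ℝ → ℝ) (hf : Continuous f)
    (hbd : ∀ s : ℝ, |f s| ≤ K * Real.exp (-(ρ * s)))
    (F : ℝ → ℝ)
    (hF : F = fun t => -(1 / (2 * Real.sqrt μ)) *
      ∫ s : ℝ, Real.exp (-(Real.sqrt μ) * |t - s|) * f s) :
    (∀ t, DifferentiableAt ℝ F t) ∧ (∀ t, DifferentiableAt ℝ (deriv F) t) ∧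
    (∀ t, deriv (deriv F) t - μ * F t = f t) ∧
    (∀ t, |F t| ≤ K * Real.exp (-(ρ * t)) / (μ - ρ ^ 2)) := by
  have hμc : √μ ^ 2 = μ := sq_sqrt hμ.le
  set c := √μ
  have hc : 0 < c := sqrt_pos.2 hμ
  have hL := integrableOn_exp_mul_mul_Iic hf hρ hbd
  have hR := integrableOn_exp_neg_mul_mul_Ioi hf hρ hbd
  have hFS : F = fun t => -(1 / (2 * c)) * greenSum c f t := by
    rw [hF]
    funext t
    rw [integral_exp_neg_mul_abs_sub_mul_eq_greenSum (hL t) (hR t)]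
  have hF' : ∀ t, HasDerivAt F (-(1 / 2) * greenDiff c f t) t := fun t => by
    rw [hFS]
    exact ((hasDerivAt_greenSum hf hL hR t).const_mul _).congr_deriv (by field_simp)
  have hF'' : ∀ t, HasDerivAt (deriv F) (μ * F t + f t) t := fun t => by
    rw [funext fun t => (hF' t).deriv, hFS, ← hμc]
    exact ((hasDerivAt_greenDiff hf hL hR t).const_mul _).congr_deriv (by field_simp; ring)
  refine ⟨fun t => (hF' t).differentiableAt, fun t => (hF'' t).differentiableAt,
    fun t => by rw [(hF'' t).deriv]; ring, fun t => ?_⟩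
  rw [hFS, ← hμc, abs_mul, abs_neg, abs_of_pos (by positivity)]
  calc 1 / (2 * c) * |greenSum c f t|
      ≤ 1 / (2 * c) * (2 * c * K * exp (-(ρ * t)) / (c ^ 2 - ρ ^ 2)) :=
        mul_le_mul_of_nonneg_left (abs_greenSum_le hρ hbd t) (by positivity)
    _ = K * exp (-(ρ * t)) / (c ^ 2 - ρ ^ 2) := by field_simp

/-- Green's function for the mode ODE `F'' - μF = f` on the line: convolution against
`-(1/(2√μ)) e^{-√μ|t-s|}` inverts the operator and preserves the exponential weight
`e^{-ρt}` for `|ρ| < √μ`. -/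
theorem green_function_mode_ODE (μ ρ K : ℝ) (hμ : 0 < μ) (hρ : |ρ| < Real.sqrt μ)
    (hK : 0 ≤ K) (f : ℝ → ℝ) (hf : Continuous f)
    (hbd : ∀ s : ℝ, |f s| ≤ K * Real.exp (-(ρ * s)))
    (F : ℝ → ℝ)
    (hF : F = fun t => -(1 / (2 * Real.sqrt μ)) *
      ∫ s : ℝ, Real.exp (-(Real.sqrt μ) * |t - s|) * f s) :
    (∀ t, DifferentiableAt ℝ F t) ∧ (∀ t, DifferentiableAt ℝ (deriv F) t) ∧
    (∀ t, deriv (deriv F) t - μ * F t = f t) ∧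
    (∀ t, |F t| ≤ K * Real.exp (-(ρ * t)) / (μ - ρ ^ 2)) :=
  green_function_mode_ODE_general μ ρ K hμ hρ f hf hbd F hF
end

section
/- Let μ > 0 and write a = √μ. Each of the following pairs of functions (k, ℓ) on ℝ satisfies the coupled system −k'' + 2μ·k − ℓ' = 0 and −2ℓ'' + μ·k' + μ·ℓ = 0: (i) k(r) = e^{ar}, ℓ(r) = a·e^{ar}; (ii) k(r) = −e^{−ar}, ℓ(r) = a·e^{−ar}; (iii) k(r) = r·e^{ar}, ℓ(r) = (a·r − 3)·e^{ar}; (iv) k(r) = −r·e^{−ar}, ℓ(r) = (a·r + 3)·e^{−ar}. -/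
/-- The pair `(k, ℓ)` solves the coupled mode system
`-k'' + 2μk - ℓ' = 0`, `-2ℓ'' + μk' + μℓ = 0`. -/
def SolvesCoupledSystem (μ : ℝ) (k ℓ : ℝ → ℝ) : Prop :=
  (∀ r : ℝ, -(deriv (deriv k) r) + 2 * μ * k r - deriv ℓ r = 0) ∧
  (∀ r : ℝ, -(2 * deriv (deriv ℓ) r) + μ * deriv k r + μ * ℓ r = 0)

/-! Every solution in the statement is a linear polynomial times `exp (s * r)` with `s = ±√μ`;
this class is closed under differentiation, so the system reduces to four polynomial
identities between the coefficients, which hold because `s ^ 2 = μ`. -/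

noncomputable def linExp (s c b : ℝ) : ℝ → ℝ := fun r => (c * r + b) * Real.exp (s * r)

theorem hasDerivAt_linExp (s c b r : ℝ) :
    HasDerivAt (linExp s c b) (linExp s (s * c) (c + s * b) r) r := by
  have hlin : HasDerivAt (fun r => c * r + b) c r := (hasDerivAt_const_mul c).add_const b
  exact (hlin.mul (hasDerivAt_const_mul s).exp).congr_deriv (by simp only [linExp]; ring)

theorem deriv_linExp (s c b : ℝ) : deriv (linExp s c b) = linExp s (s * c) (c + s * b) :=
  funext fun r => (hasDerivAt_linExp s c b r).deriv

/-- `h₁, h₂` (resp. `h₃, h₄`) say that the coefficients of `r * exp (s * r)` and `exp (s * r)`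
in the first (resp. second) equation vanish. -/
theorem solvesCoupledSystem_linExp {μ s c b d e : ℝ}
    (h₁ : -(s ^ 2 * c) + 2 * μ * c - s * d = 0)
    (h₂ : -(2 * s * c + s ^ 2 * b) + 2 * μ * b - (d + s * e) = 0)
    (h₃ : -(2 * s ^ 2 * d) + μ * s * c + μ * d = 0)
    (h₄ : -(2 * (2 * s * d + s ^ 2 * e)) + μ * (c + s * b) + μ * e = 0) :
    SolvesCoupledSystem μ (linExp s c b) (linExp s d e) := by
  constructor <;> intro r <;> simp only [deriv_linExp, linExp]
  · linear_combination (r * Real.exp (s * r)) * h₁ + Real.exp (s * r) * h₂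
  · linear_combination (r * Real.exp (s * r)) * h₃ + Real.exp (s * r) * h₄

theorem SolvesCoupledSystem.congr {μ : ℝ} {k ℓ k' ℓ' : ℝ → ℝ} (h : SolvesCoupledSystem μ k ℓ)
    (hk : ∀ r, k r = k' r) (hℓ : ∀ r, ℓ r = ℓ' r) : SolvesCoupledSystem μ k' ℓ' := by
  rwa [← funext hk, ← funext hℓ]

/-- The eigenvector solutions `η₁, η₂` and generalized-eigenvector solutions `η₃, η₄`
of the mode system (2.15)–(2.16): with `a = √μ`, the four stated pairs `(k, ℓ)` solve
`-k'' + 2μk - ℓ' = 0` and `-2ℓ'' + μk' + μℓ = 0`. -/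
theorem mode_system_solutions (μ a : ℝ) (hμ : 0 < μ) (ha : a = Real.sqrt μ) :
    SolvesCoupledSystem μ (fun r => Real.exp (a * r)) (fun r => a * Real.exp (a * r)) ∧
    SolvesCoupledSystem μ (fun r => -Real.exp (-(a * r)))
      (fun r => a * Real.exp (-(a * r))) ∧
    SolvesCoupledSystem μ (fun r => r * Real.exp (a * r))
      (fun r => (a * r - 3) * Real.exp (a * r)) ∧
    SolvesCoupledSystem μ (fun r => -(r * Real.exp (-(a * r))))
      (fun r => (a * r + 3) * Real.exp (-(a * r))) := by
  obtain rfl : μ = a ^ 2 := by rw [ha, Real.sq_sqrt hμ.le]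
  refine ⟨?_, ?_, ?_, ?_⟩
  · exact (solvesCoupledSystem_linExp (s := a) (c := 0) (b := 1) (d := 0) (e := a)
      (by ring) (by ring) (by ring) (by ring)).congr (fun r => by simp [linExp])
      (fun r => by simp [linExp])
  · exact (solvesCoupledSystem_linExp (s := -a) (c := 0) (b := -1) (d := 0) (e := a)
      (by ring) (by ring) (by ring) (by ring)).congr (fun r => by simp [linExp])
      (fun r => by simp [linExp])
  · exact (solvesCoupledSystem_linExp (s := a) (c := 1) (b := 0) (d := a) (e := -3)
      (by ring) (by ring) (by ring) (by ring)).congr (fun r => by simp [linExp])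
      (fun r => by simp only [linExp]; ring)
  · exact (solvesCoupledSystem_linExp (s := -a) (c := -1) (b := 0) (d := a) (e := 3)
      (by ring) (by ring) (by ring) (by ring)).congr (fun r => by simp [linExp])
      (fun r => by simp [linExp])
end
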